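/- arXiv:1611.07565 — 2 statements merged into one kernel-verified Lean document; each statement's English description precedes it below -/
import Mathlib

section
/- Let A be a real 2×2 matrix, symmetric-part condition: suppose A₀₀ + A₁₁ ≠ 0 and set q = (A₀₁ − A₁₀)/(A₀₀ + A₁₁) and Q = [[0, q], [−q, 0]]. If A is invertible, then the matrix C = −(I + Q)·A⁻¹ is symmetric and satisfies xᵀ C A x = −xᵀx for all x ∈ ℝ². -/
open Matrix

/-!
Since `xᵀ Q x = 0` for antisymmetric `Q`, we have `xᵀ (I + Q) x = xᵀ x`, and
`C A = -(I + Q)` gives the orbital identity. Symmetry of `C` reduces, through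
`A⁻¹ = (det A)⁻¹ • adj A`, to equality of the off-diagonal entries of `(I + Q) adj A`,
which is the linear equation `q (A₀₀ + A₁₁) = A₀₁ - A₁₀` defining `q`.
-/

namespace Matrix

theorem isSymm_fin_two_iff {α : Type*} {M : Matrix (Fin 2) (Fin 2) α} :
    M.IsSymm ↔ M 1 0 = M 0 1 := by
  refine ⟨fun h => h.apply 0 1, fun h => IsSymm.ext fun i j => ?_⟩
  fin_cases i <;> fin_cases j
  exacts [rfl, h, h.symm, rfl]

theorem transpose_skew_fin_two {R : Type*} [CommRing R] (q : R) :
    (!![0, q; -q, 0])ᵀ = -!![0, q; -q, 0] := by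
  ext i j
  fin_cases i <;> fin_cases j <;> simp

theorem isSymm_one_add_skew_mul_adjugate_fin_two_iff {R : Type*} [CommRing R]
    (A : Matrix (Fin 2) (Fin 2) R) (q : R) :
    ((1 + !![0, q; -q, 0]) * A.adjugate).IsSymm ↔ q * (A 0 0 + A 1 1) = A 0 1 - A 1 0 := by
  rw [isSymm_fin_two_iff, adjugate_fin_two]
  simp only [mul_apply, Fin.sum_univ_two, add_apply, one_apply, of_apply, cons_val', cons_val_zero,
    cons_val_one, empty_val', cons_val_fin_one, Fin.isValue, ↓reduceIte, one_ne_zero, zero_ne_one]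
  constructor <;> intro h <;> linear_combination -h

theorem dotProduct_mulVec_self_eq_zero_of_transpose_eq_neg {n R : Type*} [Fintype n]
    [CommRing R] [NoZeroDivisors R] [CharZero R] {Q : Matrix n n R} (hQ : Qᵀ = -Q)
    (x : n → R) : x ⬝ᵥ (Q *ᵥ x) = 0 := by
  have h : x ⬝ᵥ (Q *ᵥ x) = -(x ⬝ᵥ (Q *ᵥ x)) := by
    conv_lhs => rw [dotProduct_mulVec, ← mulVec_transpose, hQ, neg_mulVec, neg_dotProduct,
      dotProduct_comm]
  exact self_eq_neg.1 h

theorem dotProduct_one_add_mulVec_of_transpose_eq_neg {n R : Type*} [Fintype n] [DecidableEq n]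
    [CommRing R] [NoZeroDivisors R] [CharZero R] {Q : Matrix n n R} (hQ : Qᵀ = -Q)
    (x : n → R) : x ⬝ᵥ ((1 + Q) *ᵥ x) = x ⬝ᵥ x := by
  rw [add_mulVec, one_mulVec, dotProduct_add,
    dotProduct_mulVec_self_eq_zero_of_transpose_eq_neg hQ, add_zero]

end Matrix

/-- With q = (A₀₁ − A₁₀)/(A₀₀ + A₁₁) and Q the corresponding antisymmetric
matrix, C = −(I + Q)A⁻¹ is symmetric and satisfies xᵀCAx = −xᵀx for all x ∈ ℝ². -/
theorem audic_matrix_construction (A : Matrix (Fin 2) (Fin 2) ℝ)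
    (htr : A 0 0 + A 1 1 ≠ 0)
    (q : ℝ) (hq : q = (A 0 1 - A 1 0) / (A 0 0 + A 1 1))
    (Q : Matrix (Fin 2) (Fin 2) ℝ) (hQ : Q = !![0, q; -q, 0])
    (hinv : IsUnit A.det)
    (C : Matrix (Fin 2) (Fin 2) ℝ) (hC : C = -((1 + Q) * A⁻¹)) :
    C.IsSymm ∧ ∀ x : Fin 2 → ℝ, x ⬝ᵥ (C *ᵥ (A *ᵥ x)) = -(x ⬝ᵥ x) := by
  subst hQ hC
  refine ⟨?_, fun x => ?_⟩
  · have hq' : q * (A 0 0 + A 1 1) = A 0 1 - A 1 0 := by rw [hq, div_mul_cancel₀ _ htr]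
    rw [inv_def, Matrix.mul_smul]
    exact (((isSymm_one_add_skew_mul_adjugate_fin_two_iff A q).2 hq').smul _).neg
  · rw [mulVec_mulVec, neg_mul, Matrix.mul_assoc, nonsing_inv_mul A hinv, mul_one, neg_mulVec,
      dotProduct_neg, dotProduct_one_add_mulVec_of_transpose_eq_neg (transpose_skew_fin_two q)]
end

section
/- Let x(t), y(t) be solutions in the basin B_A of an exponentially stable hyperbolic equilibrium A of ẋ = f(x), f ∈ C², where the spectrum of Df(A) splits as {λˢ} ∪ σˢˢ with Re λˢ of multiplicity one and max Re σˢˢ < Re λˢ < 0. Suppose the limits η(x(s)) := lim_{t→∞} Φ(0,t)Pˢ(x(t) − A) and η(y(s)) exist for s large (where Φ is the transition matrix of the linearization and Pˢ the spectral projection onto the leading eigenspace Eˢ). Then x(t) and y(t) lie on the same leaf of the strong stable foliation F_ss for all t (equivalently, ‖x(t) − y(t)‖ ≤ C e^{−α^{ss} t} for some α^{ss} with |α^{ss}| > |Re λˢ|) if and only if η(x(s)) = η(y(s)); and η(x(s)) = 0 if and only if x(t) lies in the strong stable manifold W^{ss}(A). -/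
open Matrix Filter

lemma exp_mul_tendsto_zero {c : ℝ} (hc : c < 0) :
    Tendsto (fun t : ℝ => Real.exp (c * t)) atTop (nhds 0) := by
  have h1 : Tendsto (fun t : ℝ => c * t) atTop atBot :=
    tendsto_id.const_mul_atTop_of_neg hc
  exact Real.tendsto_exp_atBot.comp h1

lemma key_lemma {d : ℕ} (lams : ℝ) (w : Fin d → ℝ) (z : ℝ → Fin d → ℝ)
    (C0 δ : ℝ) (hδ : δ > -lams)
    (h : ∀ t ≥ (0:ℝ), ‖z t - Real.exp (lams * t) • w‖ ≤ C0 * Real.exp (-δ * t)) :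
    (∃ C αss : ℝ, αss > -lams ∧ ∀ t ≥ (0:ℝ), ‖z t‖ ≤ C * Real.exp (-αss * t)) ↔ w = 0 := by
  constructor
  · rintro ⟨C, α, hα, hb⟩
    have key : ∀ t ≥ (0:ℝ), ‖w‖ ≤ C0 * Real.exp ((-δ - lams) * t) + C * Real.exp ((-α - lams) * t) := by
      intro t ht
      have he : (0:ℝ) < Real.exp (lams * t) := Real.exp_pos _
      have h1 : Real.exp (lams * t) * ‖w‖ ≤ C0 * Real.exp (-δ * t) + C * Real.exp (-α * t) := by
        have := norm_sub_norm_le (z t - Real.exp (lams*t) • w) (z t)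
        have h2 : ‖Real.exp (lams * t) • w‖ ≤ ‖z t - Real.exp (lams*t) • w‖ + ‖z t‖ := by
          have := norm_sub_le (z t - Real.exp (lams*t) • w) (z t)
          simpa [sub_sub_cancel_left, norm_neg] using this
        calc Real.exp (lams * t) * ‖w‖ = ‖Real.exp (lams * t) • w‖ := by
              rw [norm_smul, Real.norm_eq_abs, abs_of_pos he]
          _ ≤ ‖z t - Real.exp (lams*t) • w‖ + ‖z t‖ := h2
          _ ≤ C0 * Real.exp (-δ * t) + C * Real.exp (-α * t) := add_le_add (h t ht) (hb t ht)
      have h3 : ‖w‖ ≤ (C0 * Real.exp (-δ * t) + C * Real.exp (-α * t)) / Real.exp (lams * t) :=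
        (le_div_iff₀ he).2 (by linarith [h1])
      have hexp : ∀ a : ℝ, Real.exp (a * t) / Real.exp (lams * t) = Real.exp ((a - lams) * t) := by
        intro a; rw [← Real.exp_sub]; ring_nf
      calc ‖w‖ ≤ (C0 * Real.exp (-δ * t) + C * Real.exp (-α * t)) / Real.exp (lams * t) := h3
        _ = C0 * Real.exp ((-δ - lams) * t) + C * Real.exp ((-α - lams) * t) := by
            rw [add_div, mul_div_assoc, mul_div_assoc, hexp, hexp]
    have hlim : Tendsto (fun t => C0 * Real.exp ((-δ - lams) * t) + C * Real.exp ((-α - lams) * t)) atTop (nhds 0) := by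
      have l1 := (exp_mul_tendsto_zero (show -δ - lams < 0 by linarith)).const_mul C0
      have l2 := (exp_mul_tendsto_zero (show -α - lams < 0 by linarith)).const_mul C
      simpa using l1.add l2
    have : ‖w‖ ≤ 0 := ge_of_tendsto hlim (eventually_atTop.2 ⟨0, key⟩)
    exact norm_le_zero_iff.1 this
  · rintro rfl
    exact ⟨C0, δ, hδ, fun t ht => by simpa using h t ht⟩


/-- For solutions x, y in the basin of an exponentially stable hyperbolic
equilibrium A whose Jacobian J has a simple real leading eigenvalue λˢ (rest of the
spectrum strictly below), admitting asymptotic representations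
x(t) − A = e^{λˢt}·η_x + O(e^{−δt}) with η_x = c_x·vˢ in the leading eigenspace:
x and y lie on the same leaf of the strong stable foliation (i.e. converge to each
other at a rate faster than |λˢ|) iff η_x = η_y; and x lies in the strong stable
manifold W^{ss}(A) (i.e. converges to A faster than |λˢ|) iff η_x = 0. -/
theorem strong_stable_leaf_characterization {d : ℕ}
    (f : (Fin d → ℝ) → (Fin d → ℝ)) (hf : ContDiff ℝ 2 f)
    (A : Fin d → ℝ) (hfA : f A = 0)
    (J : Matrix (Fin d) (Fin d) ℝ)
    (hJ : ∀ u : Fin d → ℝ, J *ᵥ u = fderiv ℝ f A u)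
    (lams : ℝ) (hlam : lams < 0)
    (vs : Fin d → ℝ) (hvs : vs ≠ 0) (heig : J *ᵥ vs = lams • vs)
    (hgap : ∀ μ : ℂ, μ ∈ spectrum ℂ (J.map (algebraMap ℝ ℂ)) → μ ≠ (lams : ℂ) → μ.re < lams)
    (x y : ℝ → Fin d → ℝ)
    (hxsol : ∀ t : ℝ, HasDerivAt x (f (x t)) t)
    (hysol : ∀ t : ℝ, HasDerivAt y (f (y t)) t)
    (cx cy : ℝ) (Cx Cy δ : ℝ) (hδ : δ > -lams)
    (hrepx : ∀ t ≥ (0 : ℝ), ‖x t - A - Real.exp (lams * t) • (cx • vs)‖ ≤ Cx * Real.exp (-δ * t))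
    (hrepy : ∀ t ≥ (0 : ℝ), ‖y t - A - Real.exp (lams * t) • (cy • vs)‖ ≤ Cy * Real.exp (-δ * t)) :
    ((∃ C αss : ℝ, αss > -lams ∧ ∀ t ≥ (0 : ℝ), ‖x t - y t‖ ≤ C * Real.exp (-αss * t)) ↔
      cx • vs = cy • vs) ∧
    ((∃ C αss : ℝ, αss > -lams ∧ ∀ t ≥ (0 : ℝ), ‖x t - A‖ ≤ C * Real.exp (-αss * t)) ↔
      cx • vs = (0 : Fin d → ℝ)) := by
  constructor
  · have hbound : ∀ t ≥ (0:ℝ),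
        ‖(fun s => x s - y s) t - Real.exp (lams * t) • (cx • vs - cy • vs)‖
          ≤ (Cx + Cy) * Real.exp (-δ * t) := by
      intro t ht
      have : (x t - y t) - Real.exp (lams * t) • (cx • vs - cy • vs)
          = (x t - A - Real.exp (lams * t) • (cx • vs))
            - (y t - A - Real.exp (lams * t) • (cy • vs)) := by
        rw [smul_sub]; abel
      calc ‖(x t - y t) - Real.exp (lams * t) • (cx • vs - cy • vs)‖
          = ‖(x t - A - Real.exp (lams * t) • (cx • vs))
            - (y t - A - Real.exp (lams * t) • (cy • vs))‖ := by rw [this]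
        _ ≤ ‖x t - A - Real.exp (lams * t) • (cx • vs)‖
            + ‖y t - A - Real.exp (lams * t) • (cy • vs)‖ := norm_sub_le _ _
        _ ≤ Cx * Real.exp (-δ * t) + Cy * Real.exp (-δ * t) :=
            add_le_add (hrepx t ht) (hrepy t ht)
        _ = (Cx + Cy) * Real.exp (-δ * t) := by ring
    have := key_lemma lams (cx • vs - cy • vs) (fun t => x t - y t) (Cx + Cy) δ hδ hbound
    rw [this, sub_eq_zero]
  · have := key_lemma lams (cx • vs) (fun t => x t - A) Cx δ hδ hrepx
    rw [this]
end
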